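/- arXiv:2209.07475 — 2 statements merged into one kernel-verified Lean document; each statement's English description precedes it below -/
import Mathlib

section
/- Let v₁, v₂, t be neurons with incoming weights W₁, W₂, W_t : Fin m → ℝ and biases b₁, b₂, b_t, with ρ₁, ρ₂ > 0 such that W_t = ρ₁ • W₁ + ρ₂ • W₂ and b_t = ρ₁*b₁ + ρ₂*b₂. For any input x, if (∑ j, W₁(j)*x(j) + b₁) and (∑ j, W₂(j)*x(j) + b₂) have the same sign (their product is ≥ 0), then ReLU(∑ j, W_t(j)*x(j) + b_t) = ρ₁*ReLU(∑ j, W₁(j)*x(j) + b₁) + ρ₂*ReLU(∑ j, W₂(j)*x(j) + b₂). -/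
/-! ReLU is positively homogeneous, and additive on pairs of reals of the same sign. Since
`ρ₁, ρ₂ > 0`, the pre-activations `ρ₁ a` and `ρ₂ b` of the two scaled reference neurons still agree
in sign, and their sum is the pre-activation of the pruned neuron. -/

noncomputable def ReLU (x : ℝ) : ℝ := max x 0

theorem ReLU_mul_of_nonneg {c : ℝ} (hc : 0 ≤ c) (a : ℝ) : ReLU (c * a) = c * ReLU a := by
  simp only [ReLU, mul_max_of_nonneg _ _ hc, mul_zero]

theorem ReLU_add_of_mul_nonneg {a b : ℝ} (hab : 0 ≤ a * b) : ReLU (a + b) = ReLU a + ReLU b := by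
  simp only [ReLU]
  rcases mul_nonneg_iff.mp hab with ⟨ha, hb⟩ | ⟨ha, hb⟩
  · rw [max_eq_left ha, max_eq_left hb, max_eq_left (add_nonneg ha hb)]
  · rw [max_eq_right ha, max_eq_right hb, max_eq_right (add_nonpos ha hb), add_zero]

theorem sum_linearCombination_mul_add {ι : Type*} [Fintype ι] (W₁ W₂ x : ι → ℝ)
    (b₁ b₂ ρ₁ ρ₂ : ℝ) :
    ∑ j, (ρ₁ • W₁ + ρ₂ • W₂) j * x j + (ρ₁ * b₁ + ρ₂ * b₂) =
      ρ₁ * (∑ j, W₁ j * x j + b₁) + ρ₂ * (∑ j, W₂ j * x j + b₂) := by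
  simp only [Pi.add_apply, Pi.smul_apply, smul_eq_mul, add_mul, mul_assoc,
    Finset.sum_add_distrib, ← Finset.mul_sum]
  ring

theorem prune_linear_combination_neuron (m : ℕ) (W₁ W₂ W_t : Fin m → ℝ)
    (b₁ b₂ b_t ρ₁ ρ₂ : ℝ) (hρ₁ : 0 < ρ₁) (hρ₂ : 0 < ρ₂)
    (hW : W_t = ρ₁ • W₁ + ρ₂ • W₂) (hb : b_t = ρ₁ * b₁ + ρ₂ * b₂)
    (x : Fin m → ℝ)
    (hsign : (∑ j, W₁ j * x j + b₁) * (∑ j, W₂ j * x j + b₂) ≥ 0) :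
    ReLU (∑ j, W_t j * x j + b_t) =
      ρ₁ * ReLU (∑ j, W₁ j * x j + b₁) + ρ₂ * ReLU (∑ j, W₂ j * x j + b₂) := by
  set a := ∑ j, W₁ j * x j + b₁
  set b := ∑ j, W₂ j * x j + b₂
  have hscaled : 0 ≤ (ρ₁ * a) * (ρ₂ * b) := by
    rw [mul_mul_mul_comm]
    exact mul_nonneg (mul_pos hρ₁ hρ₂).le hsign
  rw [hW, hb, sum_linearCombination_mul_add, ReLU_add_of_mul_nonneg hscaled,
    ReLU_mul_of_nonneg hρ₁.le, ReLU_mul_of_nonneg hρ₂.le]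
end

section
/- Suppose for neurons v, t with parameters (W_v, b_v), (W_t, b_t) ∈ (Fin m → ℝ) × ℝ and both ReLU activations, the output values agree up to the positive factor ρ on every input (i.e., for all x, ReLU(⟨W_t, x⟩ + b_t) = ρ * ReLU(⟨W_v, x⟩ + b_v)) and W_v ≠ 0. Then W_t = ρ • W_v and b_t = ρ * b_v. -/
lemma ReLU_of_nonneg {x : ℝ} (hx : 0 ≤ x) : ReLU x = x := max_eq_left hx

lemma eq_mul_of_ReLU_eq_mul_ReLU {a c ρ : ℝ} (hρ : 0 < ρ) (hc : 0 < c)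
    (h : ReLU a = ρ * ReLU c) : a = ρ * c := by
  rw [ReLU_of_nonneg hc.le] at h
  have ha : 0 < a := by
    have hpos : 0 < ReLU a := h ▸ mul_pos hρ hc
    simpa [ReLU] using hpos
  rwa [ReLU_of_nonneg ha.le] at h

lemma LinearMap.exists_apply_eq_one {E : Type*} [AddCommGroup E] [Module ℝ E]
    {L : E →ₗ[ℝ] ℝ} (hL : L ≠ 0) : ∃ v, L v = 1 := by
  obtain ⟨w, hw⟩ := DFunLike.ne_iff.mp hL
  exact ⟨(L w)⁻¹ • w, by simpa [map_smul] using inv_mul_cancel₀ hw⟩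

theorem LinearMap.eq_smul_of_ReLU_eq_mul_ReLU {E : Type*} [AddCommGroup E] [Module ℝ E]
    {L L' : E →ₗ[ℝ] ℝ} {b b' ρ : ℝ} (hρ : 0 < ρ) (hL : L ≠ 0)
    (h : ∀ x, ReLU (L' x + b') = ρ * ReLU (L x + b)) :
    L' = ρ • L ∧ b' = ρ * b := by
  obtain ⟨v, hv⟩ := L.exists_apply_eq_one hL
  have affine_eq : ∀ x, L' x + b' = ρ * (L x + b) := by
    intro x
    have on_ray : ∀ s, |L x + b| < s → L' x + b' + s * L' v = ρ * (L x + b + s) := by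
      intro s hs
      have hpos : 0 < L x + b + s := by linarith [neg_abs_le (L x + b)]
      have := eq_mul_of_ReLU_eq_mul_ReLU hρ (by simpa [hv, add_right_comm] using hpos)
        (h (x + s • v))
      simpa [hv, add_right_comm] using this
    have h₁ := on_ray (|L x + b| + 1) (by linarith)
    have h₂ := on_ray (|L x + b| + 2) (by linarith)
    linear_combination (|L x + b| + 2) * h₁ - (|L x + b| + 1) * h₂
  have hb : b' = ρ * b := by simpa using affine_eq 0
  refine ⟨LinearMap.ext fun x => ?_, hb⟩
  have := affine_eq x
  simp only [LinearMap.smul_apply, smul_eq_mul]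
  linarith

theorem proportional_activation_forces_proportional_params
    (m : ℕ) (W_v W_t : Fin m → ℝ) (b_v b_t ρ : ℝ) (hρ : 0 < ρ)
    (hW : W_v ≠ 0)
    (h : ∀ x : Fin m → ℝ,
      ReLU (∑ j, W_t j * x j + b_t) = ρ * ReLU (∑ j, W_v j * x j + b_v)) :
    W_t = ρ • W_v ∧ b_t = ρ * b_v := by
  let D := dotProductEquiv ℝ (Fin m)
  obtain ⟨hL, hb⟩ := LinearMap.eq_smul_of_ReLU_eq_mul_ReLU (L := D W_v) (L' := D W_t) hρ
    (by simpa using hW) h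
  exact ⟨D.injective (by rw [hL, map_smul]), hb⟩
end
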